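/- Let h ∈ (0,1], α ∈ (0,1], τ > 0 and p ∈ [0,1) be real numbers, and let X be a real random variable whose distribution is the Gaussian measure on ℝ with mean μ_h = h·α·τ and variance σ_h² = h·α·τ·(1−p). If the real number θ satisfies θ < h·α − 6.36·√(h·α/τ), then Pr(X < θ·τ) < 2·10⁻¹⁰. (Theorem 1 of the paper: a cross-chain message gathers at least θτ honest votes with high probability, stated under the paper's Normal approximation of the Binomial vote count of honest envoys.) -/

import Mathlib

/-!
The Gaussian density is dominated by its tangent exponential at any point `c` (the exponent is a
concave quadratic). For `c < μ` that exponential is integrable on `(-∞, c]`, which gives the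
Mills-ratio bound `Pr(X < c) ≤ σ / (a √(2π)) · exp (-a² / 2σ²)` with `a = μ - c`. The hypothesis on `θ`
says `a ≥ 6.36 √(hατ)`, and `σ² = hατ(1 - p) ≤ hατ`, so `a ≥ 6.36 σ` and the bound is at most
`exp (-20) / 15.9 < 2 · 10⁻¹⁰`.
-/

open MeasureTheory ProbabilityTheory Set Real
open scoped NNReal

lemma mul_lt_sub_sqrt_mul {x τ θ k : ℝ} (hτ : 0 < τ) (hθ : θ < x - k * √(x / τ)) :
    θ * τ < x * τ - k * √(x * τ) := by
  have hsqrt : √(x / τ) * τ = √(x * τ) := by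
    rw [← sqrt_sq hτ.le, ← sqrt_mul' _ (sq_nonneg τ), sqrt_sq hτ.le]
    congr 1
    field_simp
  calc θ * τ < (x - k * √(x / τ)) * τ := mul_lt_mul_of_pos_right hθ hτ
    _ = x * τ - k * √(x * τ) := by rw [← hsqrt]; ring

lemma lt_exp_twenty : (3.2e8 : ℝ) < exp 20 := by
  calc (3.2e8 : ℝ) < 2.7 ^ 20 := by norm_num
    _ ≤ exp 1 ^ 20 := by gcongr; linarith [exp_one_gt_d9]
    _ = exp 20 := by rw [← exp_nat_mul]; norm_num

lemma two_point_five_le_sqrt_two_mul_pi : (2.5 : ℝ) ≤ √(2 * π) :=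
  le_sqrt_of_sq_le (by linarith [pi_gt_d2])

namespace ProbabilityTheory

lemma gaussianPDFReal_le_mul_exp (μ : ℝ) (v : ℝ≥0) (c x : ℝ) :
    gaussianPDFReal μ v x ≤ gaussianPDFReal μ v c * exp ((μ - c) / v * (x - c)) := by
  simp only [gaussianPDFReal, mul_assoc, ← exp_add]
  gcongr
  have hgap : -(c - μ) ^ 2 / (2 * v) + (μ - c) / v * (x - c) - -(x - μ) ^ 2 / (2 * v)
      = (x - c) ^ 2 / (2 * v) := by ring
  rw [← sub_nonneg, hgap]
  positivity

lemma gaussianReal_Iio_le_gaussianPDFReal_mul_div {μ c : ℝ} {v : ℝ≥0} (hv : v ≠ 0)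
    (hc : c < μ) :
    gaussianReal μ v (Iio c) ≤ ENNReal.ofReal (gaussianPDFReal μ v c * v / (μ - c)) := by
  have ha : 0 < μ - c := sub_pos.2 hc
  set b := (μ - c) / v
  have hb : 0 < b := div_pos ha (by positivity)
  have htangent : ∫ x in Iic c, gaussianPDFReal μ v c * exp (b * (x - c))
      = gaussianPDFReal μ v c * v / (μ - c) := by
    simp_rw [mul_sub, exp_sub]
    rw [integral_const_mul, integral_div, integral_exp_mul_Iic hb]
    simp only [b]
    field_simp
  calc gaussianReal μ v (Iio c) ≤ gaussianReal μ v (Iic c) := measure_mono Iio_subset_Iic_self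
    _ = ∫⁻ x in Iic c, ENNReal.ofReal (gaussianPDFReal μ v x) := gaussianReal_apply μ hv _
    _ ≤ ∫⁻ x in Iic c, ENNReal.ofReal (gaussianPDFReal μ v c * exp (b * (x - c))) := by
      gcongr with x
      exact gaussianPDFReal_le_mul_exp μ v c x
    _ = _ := by
      rw [← htangent, ofReal_integral_eq_lintegral_ofReal]
      · simp_rw [mul_sub, exp_sub]
        exact ((integrableOn_exp_mul_Iic hb c).div_const _).const_mul _
      · exact .of_forall fun x => mul_nonneg (gaussianPDFReal_nonneg _ _ _) (exp_pos _).le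

lemma gaussianPDFReal_mul_div_lt {μ c : ℝ} {v : ℝ≥0} (hv : v ≠ 0)
    (hgap : 6.36 * √v ≤ μ - c) : gaussianPDFReal μ v c * v / (μ - c) < 2 / 10 ^ 10 := by
  set s := √(v : ℝ)
  have hs : 0 < s := sqrt_pos.2 (by positivity)
  have hsv : s ^ 2 = v := sq_sqrt v.2
  have ha : 0 < μ - c := by linarith
  have hexp : exp (-(c - μ) ^ 2 / (2 * v)) ≤ exp (-20) := by
    rw [exp_le_exp, neg_div, neg_le_neg_iff, le_div_iff₀ (by positivity), ← hsv]
    nlinarith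
  have hratio : (v : ℝ) / (μ - c) ≤ s / 6.36 := by
    rw [div_le_div_iff₀ ha (by norm_num), ← hsv]
    nlinarith
  have hnorm : (√(2 * π * v))⁻¹ ≤ (2.5 * s)⁻¹ := by
    rw [sqrt_mul (by positivity)]
    gcongr
    exact two_point_five_le_sqrt_two_mul_pi
  calc gaussianPDFReal μ v c * v / (μ - c)
      = (√(2 * π * v))⁻¹ * exp (-(c - μ) ^ 2 / (2 * v)) * (v / (μ - c)) := by
        rw [gaussianPDFReal, mul_div_assoc]
    _ ≤ (2.5 * s)⁻¹ * exp (-20) * (s / 6.36) := by gcongr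
    _ = exp (-20) / 15.9 := by field_simp; norm_num
    _ < (3.2e8)⁻¹ / 15.9 := by
        gcongr
        rw [exp_neg]
        exact inv_strictAnti₀ (by norm_num) lt_exp_twenty
    _ ≤ 2 / 10 ^ 10 := by norm_num

lemma gaussianReal_Iio_lt_of_le_sub {μ c : ℝ} {v : ℝ≥0} (hv : v ≠ 0)
    (hgap : 6.36 * √v ≤ μ - c) : gaussianReal μ v (Iio c) < ENNReal.ofReal (2 / 10 ^ 10) := by
  have hc : c < μ := by
    have : 0 < √(v : ℝ) := sqrt_pos.2 (by positivity)
    linarith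
  calc gaussianReal μ v (Iio c) ≤ ENNReal.ofReal (gaussianPDFReal μ v c * v / (μ - c)) :=
        gaussianReal_Iio_le_gaussianPDFReal_mul_div hv hc
    _ < ENNReal.ofReal (2 / 10 ^ 10) :=
        (ENNReal.ofReal_lt_ofReal_iff (by norm_num)).2 (gaussianPDFReal_mul_div_lt hv hgap)

end ProbabilityTheory

theorem eden_theorem_honest_general
    {Ω : Type*} [MeasurableSpace Ω] (P : Measure Ω)
    (h α τ p θ : ℝ)
    (hh : h ∈ Set.Ioc (0 : ℝ) 1) (hα : α ∈ Set.Ioc (0 : ℝ) 1)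
    (hτ : 0 < τ) (hp : p ∈ Set.Ico (0 : ℝ) 1)
    (X : Ω → ℝ)
    (hX : P.map X = gaussianReal (h * α * τ) (h * α * τ * (1 - p)).toNNReal)
    (hθ : θ < h * α - 6.36 * Real.sqrt (h * α / τ)) :
    P {ω | X ω < θ * τ} < ENNReal.ofReal (2 / 10 ^ 10) := by
  have hmean : 0 < h * α * τ := mul_pos (mul_pos hh.1 hα.1) hτ
  have hvar : 0 < h * α * τ * (1 - p) := mul_pos hmean (by linarith [hp.2])
  have hv : (h * α * τ * (1 - p)).toNNReal ≠ 0 := (toNNReal_pos.2 hvar).ne'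
  have hgap : 6.36 * √((h * α * τ * (1 - p)).toNNReal : ℝ) ≤ h * α * τ - θ * τ := by
    have hθτ := mul_lt_sub_sqrt_mul hτ hθ
    have hsd_le : √(h * α * τ * (1 - p)) ≤ √(h * α * τ) :=
      sqrt_le_sqrt (mul_le_of_le_one_right hmean.le (by linarith [hp.1]))
    rw [coe_toNNReal _ hvar.le]
    linarith
  have hXm : AEMeasurable X P := .of_map_ne_zero (hX ▸ IsProbabilityMeasure.ne_zero _)
  calc P {ω | X ω < θ * τ} = P.map X (Iio (θ * τ)) :=
        (Measure.map_apply_of_aemeasurable hXm measurableSet_Iio).symm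
    _ < ENNReal.ofReal (2 / 10 ^ 10) := hX ▸ gaussianReal_Iio_lt_of_le_sub hv hgap

/-- Theorem 1 of the paper (under the Normal approximation): if
`θ < h·α − 6.36·√(h·α/τ)`, then a Gaussian vote count `X ∼ N(hατ, hατ(1−p))`
satisfies `Pr(X < θτ) < 2·10⁻¹⁰`. -/
theorem eden_theorem_honest
    {Ω : Type*} [MeasurableSpace Ω] (P : Measure Ω) [IsProbabilityMeasure P]
    (h α τ p θ : ℝ)
    (hh : h ∈ Set.Ioc (0 : ℝ) 1) (hα : α ∈ Set.Ioc (0 : ℝ) 1)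
    (hτ : 0 < τ) (hp : p ∈ Set.Ico (0 : ℝ) 1)
    (X : Ω → ℝ)
    (hX : P.map X = gaussianReal (h * α * τ) (h * α * τ * (1 - p)).toNNReal)
    (hθ : θ < h * α - 6.36 * Real.sqrt (h * α / τ)) :
    P {ω | X ω < θ * τ} < ENNReal.ofReal (2 / 10 ^ 10) :=
  eden_theorem_honest_general P h α τ p θ hh hα hτ hp X hX hθ
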